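/- One step of max-distance sketch-and-project, applied after some initial sketch-and-project step, contracts by a factor (1 − γ σ_p²) where γ = 1/max_i Σ_{j≠i} p_j > 1: if x^k was itself produced by a sketch-and-project step (so that f_{i_{k-1}}(x^k) = 0) and x^{k+1} is the max-distance update, then ‖x^{k+1} − x*‖²_B ≤ (1 − γ σ_p²(B,S)) ‖x^k − x*‖²_B for any strictly positive probability vector p. -/

import Mathlib

open Matrix BigOperators

/-- The four Penrose equations characterizing the Moore–Penrose pseudoinverse `P` of `M`. -/
def PenroseInv {k : ℕ} (M P : Matrix (Fin k) (Fin k) ℝ) : Prop :=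
  M * P * M = M ∧ P * M * P = P ∧ (M * P)ᵀ = M * P ∧ (P * M)ᵀ = P * M

/-- The projection matrix `Z = B^{-1/2} Aᵀ S (Sᵀ A B⁻¹ Aᵀ S)† Sᵀ A B^{-1/2}`, where `Bh`
plays the role of `B^{1/2}` and `P` that of the pseudoinverse `(Sᵀ A B⁻¹ Aᵀ S)†`. -/
noncomputable def Zmat {m n τ : ℕ} (A : Matrix (Fin m) (Fin n) ℝ) (B Bh : Matrix (Fin n) (Fin n) ℝ)
    (S : Matrix (Fin m) (Fin τ) ℝ) (P : Matrix (Fin τ) (Fin τ) ℝ) :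
    Matrix (Fin n) (Fin n) ℝ :=
  Bh⁻¹ * Aᵀ * (S * P * Sᵀ) * A * Bh⁻¹

/-- Sketched loss expressed via the projection `Z`:  `f(x) = ‖B^{1/2}(x - x*)‖²_Z`. -/
noncomputable def zloss {m n τ : ℕ} (A : Matrix (Fin m) (Fin n) ℝ)
    (B Bh : Matrix (Fin n) (Fin n) ℝ) (S : Matrix (Fin m) (Fin τ) ℝ)
    (P : Matrix (Fin τ) (Fin τ) ℝ) (xs x : Fin n → ℝ) : ℝ :=
  Bh.mulVec (x - xs) ⬝ᵥ (Zmat A B Bh S P).mulVec (Bh.mulVec (x - xs))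

/-- The spectral constant `σ_p²(B,S)`. -/
noncomputable def sigmaP {m n τ q : ℕ} (A : Matrix (Fin m) (Fin n) ℝ)
    (B Bh : Matrix (Fin n) (Fin n) ℝ) (S : Fin q → Matrix (Fin m) (Fin τ) ℝ)
    (P : Fin q → Matrix (Fin τ) (Fin τ) ℝ) (p : Fin q → ℝ) : ℝ :=
  sInf {r : ℝ | ∃ v, v ≠ 0 ∧ v ∈ Set.range (B⁻¹ * Aᵀ).mulVec ∧
    r = Bh.mulVec v ⬝ᵥ (∑ i, p i • Zmat A B Bh (S i) (P i)).mulVec (Bh.mulVec v) /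
      (v ⬝ᵥ B.mulVec v)}

/-- The spectral constant `σ_∞²(B,S)`. -/
noncomputable def sigmaInf {m n τ q : ℕ} (A : Matrix (Fin m) (Fin n) ℝ)
    (B Bh : Matrix (Fin n) (Fin n) ℝ) (S : Fin q → Matrix (Fin m) (Fin τ) ℝ)
    (P : Fin q → Matrix (Fin τ) (Fin τ) ℝ) : ℝ :=
  sInf {r : ℝ | ∃ v, v ≠ 0 ∧ v ∈ Set.range (B⁻¹ * Aᵀ).mulVec ∧
    r = ⨆ i, Bh.mulVec v ⬝ᵥ (Zmat A B Bh (S i) (P i)).mulVec (Bh.mulVec v) /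
      (v ⬝ᵥ B.mulVec v)}

/-!
Write `G_i = Aᵀ S_i P_i S_iᵀ A`, so that `f_i(x) = (x - x*)ᵀ G_i (x - x*)`. The Penrose
identities make `G_i` symmetric with `G_i B⁻¹ G_i = G_i`, i.e. `B⁻¹ G_i` is a `B`-orthogonal
projection; hence a sketch-and-project step with sketch `i_k` lowers `‖x - x*‖²_B` by exactly
`f_{i_k}(x^k) = max_i f_i(x^k)`. Since `f_{i₀}(x^k) = 0`, the average `Σ_i p_i f_i(x^k)` only runs
over `i ≠ i₀` and is at most `(max_i Σ_{j ≠ i} p_j) · max_i f_i(x^k) = γ⁻¹ f_{i_k}(x^k)`, while by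
definition of `σ_p²` it is at least `σ_p² ‖x^k - x*‖²_B`.
-/

namespace PenroseInv

variable {k : ℕ} {M P Q : Matrix (Fin k) (Fin k) ℝ}

theorem unique (hP : PenroseInv M P) (hQ : PenroseInv M Q) : P = Q := by
  obtain ⟨hP1, hP2, hP3, hP4⟩ := hP
  obtain ⟨hQ1, hQ2, hQ3, hQ4⟩ := hQ
  have hMP : M * P = M * Q :=
    calc M * P = (M * Q)ᵀ * (M * P)ᵀ := by rw [hQ3, hP3, ← Matrix.mul_assoc, hQ1]
      _ = (M * P * M * Q)ᵀ := by simp only [transpose_mul, Matrix.mul_assoc]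
      _ = M * Q := by rw [hP1, hQ3]
  have hPM : P * M = Q * M :=
    calc P * M = (P * M)ᵀ * (Q * M)ᵀ := by
          rw [hP4, hQ4, Matrix.mul_assoc, ← Matrix.mul_assoc M, hQ1]
      _ = (Q * (M * P * M))ᵀ := by simp only [transpose_mul, Matrix.mul_assoc]
      _ = Q * M := by rw [hP1, hQ4]
  calc P = P * M * P := hP2.symm
    _ = Q * M * Q := by rw [hPM, Matrix.mul_assoc, hMP, ← Matrix.mul_assoc]
    _ = Q := hQ2

theorem transpose (h : PenroseInv M P) : PenroseInv Mᵀ Pᵀ := by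
  obtain ⟨h1, h2, h3, h4⟩ := h
  refine ⟨?_, ?_, ?_, ?_⟩
  · rw [← transpose_mul, ← transpose_mul, ← Matrix.mul_assoc, h1]
  · rw [← transpose_mul, ← transpose_mul, ← Matrix.mul_assoc, h2]
  · rw [← transpose_mul, h4, h4]
  · rw [← transpose_mul, h3, h3]

theorem transpose_eq (hM : Mᵀ = M) (h : PenroseInv M P) : Pᵀ = P :=
  unique (hM ▸ h.transpose) h

end PenroseInv

theorem Matrix.mulVec_dotProduct_mulVec_mulVec {ι κ : Type*} [Fintype ι] [Fintype κ]
    (C : Matrix κ ι ℝ) (D : Matrix κ κ ℝ) (r : ι → ℝ) :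
    C *ᵥ r ⬝ᵥ D *ᵥ (C *ᵥ r) = r ⬝ᵥ (Cᵀ * D * C) *ᵥ r := by
  simp only [dotProduct_mulVec, vecMul_vecMul]
  rw [Matrix.mul_assoc, ← vecMul_vecMul r, vecMul_transpose]

section Projection

variable {ι : Type*} [Fintype ι] [DecidableEq ι] {B G : Matrix ι ι ℝ}

theorem dotProduct_mulVec_nonneg_of_mul_inv_mul_self (hB : B.PosDef) (hG : Gᵀ = G)
    (hGG : G * B⁻¹ * G = G) (v : ι → ℝ) : 0 ≤ v ⬝ᵥ G *ᵥ v := by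
  have h : v ⬝ᵥ G *ᵥ v = G *ᵥ v ⬝ᵥ B⁻¹ *ᵥ (G *ᵥ v) := by
    rw [mulVec_dotProduct_mulVec_mulVec, hG, hGG]
  rw [h]
  simpa using hB.inv.posSemidef.dotProduct_mulVec_nonneg (G *ᵥ v)

theorem dotProduct_mulVec_one_sub_inv_mul_mulVec (hB : Bᵀ = B) (hBdet : IsUnit B.det)
    (hG : Gᵀ = G) (hGG : G * B⁻¹ * G = G) (r : ι → ℝ) :
    (1 - B⁻¹ * G) *ᵥ r ⬝ᵥ B *ᵥ ((1 - B⁻¹ * G) *ᵥ r) = r ⬝ᵥ B *ᵥ r - r ⬝ᵥ G *ᵥ r := by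
  have hT : (1 - B⁻¹ * G)ᵀ * B * (1 - B⁻¹ * G) = B - G := by
    rw [transpose_sub, transpose_one, transpose_mul, hG, transpose_nonsing_inv, hB, sub_mul,
      one_mul, Matrix.mul_assoc, nonsing_inv_mul _ hBdet, mul_one, mul_sub, mul_one, sub_mul,
      mul_nonsing_inv_cancel_left _ _ hBdet, ← Matrix.mul_assoc, hGG, sub_self, sub_zero]
  rw [mulVec_dotProduct_mulVec_mulVec, hT, sub_mulVec, dotProduct_sub]

end Projection

section Averaging

open Finset

variable {ι : Type*} [Fintype ι] [DecidableEq ι] {p : ι → ℝ}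

theorem sum_mul_le_iSup_sum_erase_mul {f : ι → ℝ} {M : ℝ} (hp : ∀ i, 0 ≤ p i) {i₀ : ι}
    (hf₀ : f i₀ = 0) (hf : ∀ i, f i ≤ M) :
    ∑ i, p i * f i ≤ (⨆ i, ∑ j ∈ univ.erase i, p j) * M :=
  calc ∑ i, p i * f i = ∑ i ∈ univ.erase i₀, p i * f i := by
        rw [← sum_erase_add _ _ (mem_univ i₀), hf₀, mul_zero, add_zero]
    _ ≤ ∑ i ∈ univ.erase i₀, p i * M :=
        sum_le_sum fun i _ => mul_le_mul_of_nonneg_left (hf i) (hp i)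
    _ = (∑ i ∈ univ.erase i₀, p i) * M := (sum_mul _ _ _).symm
    _ ≤ (⨆ i, ∑ j ∈ univ.erase i, p j) * M :=
        mul_le_mul_of_nonneg_right
          (le_ciSup (f := fun i => ∑ j ∈ univ.erase i, p j) (Set.finite_range _).bddAbove i₀)
          (hf₀ ▸ hf i₀)

theorem one_lt_inv_iSup_sum_erase (hcard : 1 < Fintype.card ι) (hp : ∀ i, 0 < p i)
    (hp1 : ∑ i, p i = 1) : 1 < (⨆ i, ∑ j ∈ univ.erase i, p j)⁻¹ := by
  have : Nonempty ι := Fintype.card_pos_iff.mp (zero_lt_one.trans hcard)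
  obtain ⟨i, hi⟩ := exists_eq_ciSup_of_finite (f := fun i => ∑ j ∈ univ.erase i, p j)
  obtain ⟨j, hji⟩ := Fintype.exists_ne_of_one_lt_card hcard i
  rw [← hi, one_lt_inv₀ (sum_pos (fun k _ => hp k) ⟨j, mem_erase.2 ⟨hji, mem_univ j⟩⟩),
    sum_erase_eq_sub (mem_univ i), hp1]
  linarith [hp i]

end Averaging

/-- `sketchGram A S P = B^{1/2} Z B^{1/2}`, so that
`f(x) = (x - x*)ᵀ (sketchGram A S P) (x - x*)`. -/
def sketchGram {m n τ : ℕ} (A : Matrix (Fin m) (Fin n) ℝ) (S : Matrix (Fin m) (Fin τ) ℝ)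
    (P : Matrix (Fin τ) (Fin τ) ℝ) : Matrix (Fin n) (Fin n) ℝ :=
  Aᵀ * (S * P * Sᵀ) * A

section Sketch

variable {m n τ : ℕ} {A : Matrix (Fin m) (Fin n) ℝ} {B Bh : Matrix (Fin n) (Fin n) ℝ}
  {S : Matrix (Fin m) (Fin τ) ℝ} {P : Matrix (Fin τ) (Fin τ) ℝ}

theorem sketchGram_transpose (hB : Bᵀ = B) (hP : PenroseInv (Sᵀ * A * B⁻¹ * Aᵀ * S) P) :
    (sketchGram A S P)ᵀ = sketchGram A S P := by
  have hPt : Pᵀ = P :=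
    hP.transpose_eq (by simp only [transpose_mul, transpose_transpose, transpose_nonsing_inv, hB,
      Matrix.mul_assoc])
  simp only [sketchGram, transpose_mul, transpose_transpose, hPt, Matrix.mul_assoc]

theorem sketchGram_mul_inv_mul_self (hP : PenroseInv (Sᵀ * A * B⁻¹ * Aᵀ * S) P) :
    sketchGram A S P * B⁻¹ * sketchGram A S P = sketchGram A S P :=
  calc sketchGram A S P * B⁻¹ * sketchGram A S P
      = Aᵀ * (S * (P * (Sᵀ * A * B⁻¹ * Aᵀ * S) * P) * Sᵀ) * A := by
        simp only [sketchGram, Matrix.mul_assoc]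
    _ = sketchGram A S P := by rw [hP.2.1, sketchGram]

theorem mulVec_dotProduct_Zmat_mulVec (hBh : Bhᵀ = Bh) (hBhdet : IsUnit Bh.det)
    (v : Fin n → ℝ) :
    Bh *ᵥ v ⬝ᵥ Zmat A B Bh S P *ᵥ (Bh *ᵥ v) = v ⬝ᵥ sketchGram A S P *ᵥ v := by
  rw [mulVec_dotProduct_mulVec_mulVec, hBh]
  simp only [Zmat, sketchGram, Matrix.mul_assoc, mul_nonsing_inv_cancel_left _ _ hBhdet,
    nonsing_inv_mul _ hBhdet, Matrix.mul_one]

theorem zloss_eq (hBh : Bhᵀ = Bh) (hBhdet : IsUnit Bh.det) (xs x : Fin n → ℝ) :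
    zloss A B Bh S P xs x = (x - xs) ⬝ᵥ sketchGram A S P *ᵥ (x - xs) :=
  mulVec_dotProduct_Zmat_mulVec hBh hBhdet _

theorem sketchProject_sub_eq {b : Fin m → ℝ} {xs : Fin n → ℝ} (hxs : A *ᵥ xs = b)
    (x : Fin n → ℝ) :
    x - (B⁻¹ * Aᵀ * (S * P * Sᵀ)) *ᵥ (A *ᵥ x - b) - xs
      = (1 - B⁻¹ * sketchGram A S P) *ᵥ (x - xs) := by
  rw [← hxs, ← mulVec_sub, mulVec_mulVec, sub_mulVec, one_mulVec, sub_right_comm]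
  simp only [sketchGram, Matrix.mul_assoc]

end Sketch

theorem sigmaP_mul_le {m n τ q : ℕ} {A : Matrix (Fin m) (Fin n) ℝ}
    {B Bh : Matrix (Fin n) (Fin n) ℝ} {S : Fin q → Matrix (Fin m) (Fin τ) ℝ}
    {P : Fin q → Matrix (Fin τ) (Fin τ) ℝ} {p : Fin q → ℝ} (hB : B.PosDef) (hBh : Bhᵀ = Bh)
    (hBhdet : IsUnit Bh.det) (hP : ∀ i, PenroseInv ((S i)ᵀ * A * B⁻¹ * Aᵀ * S i) (P i))
    (hp : ∀ i, 0 ≤ p i) {v : Fin n → ℝ} (hv : v ∈ Set.range (B⁻¹ * Aᵀ).mulVec) :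
    sigmaP A B Bh S P p * (v ⬝ᵥ B *ᵥ v) ≤ ∑ i, p i * (v ⬝ᵥ sketchGram A (S i) (P i) *ᵥ v) := by
  have hnum (w : Fin n → ℝ) :
      Bh *ᵥ w ⬝ᵥ (∑ i, p i • Zmat A B Bh (S i) (P i)) *ᵥ (Bh *ᵥ w)
        = ∑ i, p i * (w ⬝ᵥ sketchGram A (S i) (P i) *ᵥ w) := by
    simp only [sum_mulVec, dotProduct_sum, smul_mulVec, dotProduct_smul, smul_eq_mul,
      mulVec_dotProduct_Zmat_mulVec hBh hBhdet]
  have hBsymm : Bᵀ = B := (isHermitian_iff_isSymm.mp hB.isHermitian).eq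
  have hnonneg (w : Fin n → ℝ) : 0 ≤ ∑ i, p i * (w ⬝ᵥ sketchGram A (S i) (P i) *ᵥ w) :=
    Finset.sum_nonneg fun i _ => mul_nonneg (hp i)
      (dotProduct_mulVec_nonneg_of_mul_inv_mul_self hB (sketchGram_transpose hBsymm (hP i))
        (sketchGram_mul_inv_mul_self (hP i)) w)
  have hBpos {w : Fin n → ℝ} (hw : w ≠ 0) : 0 < w ⬝ᵥ B *ᵥ w := by
    simpa using hB.dotProduct_mulVec_pos hw
  rcases eq_or_ne v 0 with rfl | hv0
  · simp
  rw [← le_div_iff₀ (hBpos hv0), ← hnum]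
  refine csInf_le ⟨0, ?_⟩ ⟨v, hv0, hv, rfl⟩
  rintro _ ⟨w, hw0, -, rfl⟩
  exact div_nonneg (hnum w ▸ hnonneg w) (hBpos hw0).le

theorem maxdist_one_step_gamma_contraction_general {m n τ q : ℕ} (hq : 1 < q)
    (A : Matrix (Fin m) (Fin n) ℝ) (b : Fin m → ℝ)
    (B Bh : Matrix (Fin n) (Fin n) ℝ)
    (hB : B.PosDef) (hBh : Bh.PosDef)
    (S : Fin q → Matrix (Fin m) (Fin τ) ℝ) (P : Fin q → Matrix (Fin τ) (Fin τ) ℝ)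
    (hP : ∀ i, PenroseInv ((S i)ᵀ * A * B⁻¹ * Aᵀ * S i) (P i))
    (p : Fin q → ℝ) (hppos : ∀ i, 0 < p i) (hp1 : ∑ i, p i = 1)
    (xk xs : Fin n → ℝ) (hxs : A.mulVec xs = b)
    (hx : xk - xs ∈ Set.range (B⁻¹ * Aᵀ).mulVec)
    (hzero : ∃ i₀, zloss A B Bh (S i₀) (P i₀) xs xk = 0)
    (ik : Fin q)
    (hmax : ∀ j, zloss A B Bh (S j) (P j) xs xk ≤ zloss A B Bh (S ik) (P ik) xs xk)
    (xk1 : Fin n → ℝ)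
    (hupd : xk1 = xk - (B⁻¹ * Aᵀ * (S ik * P ik * (S ik)ᵀ)).mulVec (A.mulVec xk - b)) :
    1 < (⨆ i, ∑ j ∈ Finset.univ.erase i, p j)⁻¹ ∧
    (xk1 - xs) ⬝ᵥ B.mulVec (xk1 - xs)
      ≤ (1 - (⨆ i, ∑ j ∈ Finset.univ.erase i, p j)⁻¹ * sigmaP A B Bh S P p)
          * ((xk - xs) ⬝ᵥ B.mulVec (xk - xs)) := by
  set c := ⨆ i, ∑ j ∈ Finset.univ.erase i, p j
  have hγ : 1 < c⁻¹ := one_lt_inv_iSup_sum_erase (by simpa using hq) hppos hp1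
  refine ⟨hγ, ?_⟩
  have hBsymm : Bᵀ = B := (isHermitian_iff_isSymm.mp hB.isHermitian).eq
  have hBhsymm : Bhᵀ = Bh := (isHermitian_iff_isSymm.mp hBh.isHermitian).eq
  have hBhdet : IsUnit Bh.det := (isUnit_iff_isUnit_det Bh).mp hBh.isUnit
  set r := xk - xs
  set f := fun i => r ⬝ᵥ sketchGram A (S i) (P i) *ᵥ r
  have hstep : (xk1 - xs) ⬝ᵥ B *ᵥ (xk1 - xs) = r ⬝ᵥ B *ᵥ r - f ik := by
    rw [hupd, sketchProject_sub_eq hxs, dotProduct_mulVec_one_sub_inv_mul_mulVec hBsymm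
      ((isUnit_iff_isUnit_det B).mp hB.isUnit) (sketchGram_transpose hBsymm (hP ik))
      (sketchGram_mul_inv_mul_self (hP ik))]
  obtain ⟨i₀, hi₀⟩ := hzero
  simp only [zloss_eq hBhsymm hBhdet] at hi₀ hmax
  have havg : ∑ i, p i * f i ≤ c * f ik :=
    sum_mul_le_iSup_sum_erase_mul (fun i => (hppos i).le) hi₀ hmax
  have hσ := sigmaP_mul_le hB hBhsymm hBhdet hP (fun i => (hppos i).le) hx
  have hc : 0 < c := inv_pos.mp (zero_lt_one.trans hγ)
  have hdecrease : c⁻¹ * (sigmaP A B Bh S P p * (r ⬝ᵥ B *ᵥ r)) ≤ f ik :=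
    calc c⁻¹ * (sigmaP A B Bh S P p * (r ⬝ᵥ B *ᵥ r)) ≤ c⁻¹ * (c * f ik) :=
          mul_le_mul_of_nonneg_left (hσ.trans havg) (inv_nonneg.mpr hc.le)
      _ = f ik := inv_mul_cancel_left₀ hc.ne' _
  rw [hstep]
  linarith

/-- One step of max-distance sketch-and-project, applied at a point where some sketched
loss vanishes, contracts by `(1 − γ σ_p²)` where
`γ = 1 / max_i Σ_{j ≠ i} p_j > 1` for any strictly positive probability vector `p`. -/
theorem maxdist_one_step_gamma_contraction {m n τ q : ℕ} (hq : 1 < q)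
    (A : Matrix (Fin m) (Fin n) ℝ) (b : Fin m → ℝ)
    (B Bh : Matrix (Fin n) (Fin n) ℝ)
    (hB : B.PosDef) (hBh : Bh.PosDef) (hBhB : Bh * Bh = B)
    (S : Fin q → Matrix (Fin m) (Fin τ) ℝ) (P : Fin q → Matrix (Fin τ) (Fin τ) ℝ)
    (hP : ∀ i, PenroseInv ((S i)ᵀ * A * B⁻¹ * Aᵀ * S i) (P i))
    (p : Fin q → ℝ) (hppos : ∀ i, 0 < p i) (hp1 : ∑ i, p i = 1)
    (xk xs : Fin n → ℝ) (hxs : A.mulVec xs = b)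
    (hx : xk - xs ∈ Set.range (B⁻¹ * Aᵀ).mulVec)
    (hzero : ∃ i₀, zloss A B Bh (S i₀) (P i₀) xs xk = 0)
    (ik : Fin q)
    (hmax : ∀ j, zloss A B Bh (S j) (P j) xs xk ≤ zloss A B Bh (S ik) (P ik) xs xk)
    (xk1 : Fin n → ℝ)
    (hupd : xk1 = xk - (B⁻¹ * Aᵀ * (S ik * P ik * (S ik)ᵀ)).mulVec (A.mulVec xk - b)) :
    1 < (⨆ i, ∑ j ∈ Finset.univ.erase i, p j)⁻¹ ∧
    (xk1 - xs) ⬝ᵥ B.mulVec (xk1 - xs)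
      ≤ (1 - (⨆ i, ∑ j ∈ Finset.univ.erase i, p j)⁻¹ * sigmaP A B Bh S P p)
          * ((xk - xs) ⬝ᵥ B.mulVec (xk - xs)) :=
  maxdist_one_step_gamma_contraction_general hq A b B Bh hB hBh S P hP p hppos hp1 xk xs hxs hx
    hzero ik hmax xk1 hupd
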